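/- Let n ≥ 2, d ≥ 1, α > 0, and let q = (q_1, …, q_n) be a configuration of n distinct points in ℝ^d. Suppose m̂_1, …, m̂_n > 0 and ĉ ∈ ℝ^d satisfy q_j = ĉ + ∑_{k≠j} m̂_k Q_{jk} for every j. Then ∑_{j=1}^n m̂_j ‖q_j − ĉ‖² = ∑_{1≤j<k≤n} m̂_j m̂_k ‖q_j − q_k‖^{−α}; in particular this quantity is strictly positive. Consequently, if positive masses m_1, …, m_n > 0 and λ ∈ ℝ \ {0} satisfy q_j = M^{-1} ∑_{k=1}^n m_k q_k − (α/λ) ∑_{k≠j} m_k Q_{jk} for every j (with M = ∑_k m_k), then λ < 0. -/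

import Mathlib

/-!
Pair each inner product `⟪q_j - c, Q_{jk}⟫` with its partner `⟪q_k - c, Q_{kj}⟫`: since
`Q_{kj} = -Q_{jk}`, the two add up to `⟪q_j - q_k, Q_{jk}⟫ = ‖q_j - q_k‖^{-α}`. Taking the inner
product of `q_j - c = ∑_{k ≠ j} w_k Q_{jk}` with `w_j (q_j - c)` and summing over `j` therefore
gives `∑ w_j ‖q_j - c‖² = ∑_{j<k} w_j w_k ‖q_j - q_k‖^{-α}` for arbitrary weights `w`.
For the central configuration equation the weights are `w = -(α/λ) m`, so the left side is
`-(α/λ)` times a nonnegative number while the right side is `(α/λ)²` times a positive one.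
-/

open Finset Function RealInnerProductSpace

variable {ι E : Type*} [Fintype ι] [LinearOrder ι] [NormedAddCommGroup E]

noncomputable def pairPotential (α : ℝ) (m : ι → ℝ) (q : ι → E) : ℝ :=
  ∑ j, ∑ k ∈ univ.filter (fun k => j < k), m j * m k * ‖q j - q k‖ ^ (-α)

theorem pairPotential_pos [Nontrivial ι] (α : ℝ) {q : ι → E} (hq : Injective q)
    {m : ι → ℝ} (hm : ∀ j, 0 < m j) : 0 < pairPotential α m q := by
  have term_pos {j k : ι} (hjk : j ≠ k) : 0 < m j * m k * ‖q j - q k‖ ^ (-α) :=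
    mul_pos (mul_pos (hm j) (hm k))
      (Real.rpow_pos_of_pos (norm_pos_iff.2 (sub_ne_zero.2 (hq.ne hjk))) _)
  have row_nonneg (j : ι) :
      0 ≤ ∑ k ∈ univ.filter (fun k => j < k), m j * m k * ‖q j - q k‖ ^ (-α) :=
    sum_nonneg fun k hk => (term_pos (mem_filter.1 hk).2.ne).le
  obtain ⟨x, y, hxy⟩ := exists_pair_ne ι
  have hlt : min x y < max x y := min_lt_max.2 hxy
  refine sum_pos' (fun j _ => row_nonneg j) ⟨min x y, mem_univ _, ?_⟩
  exact sum_pos' (fun k hk => (term_pos (mem_filter.1 hk).2.ne).le)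
    ⟨max x y, mem_filter.2 ⟨mem_univ _, hlt⟩, term_pos hlt.ne⟩

theorem pairPotential_smul (α t : ℝ) (m : ι → ℝ) (q : ι → E) :
    pairPotential α (t • m) q = t ^ 2 * pairPotential α m q := by
  simp only [pairPotential, mul_sum, Pi.smul_apply, smul_eq_mul]
  exact sum_congr rfl fun _ _ => sum_congr rfl fun _ _ => by ring

variable [InnerProductSpace ℝ E]

noncomputable def pairForce (α : ℝ) (x y : E) : E :=
  (‖x - y‖ ^ (α + 2))⁻¹ • (x - y)

theorem pairForce_swap (α : ℝ) (x y : E) : pairForce α y x = -pairForce α x y := by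
  rw [pairForce, pairForce, norm_sub_rev, ← smul_neg, neg_sub]

theorem inner_sub_pairForce_add_inner_sub_pairForce (α : ℝ) (c : E) {x y : E} (h : x ≠ y) :
    ⟪x - c, pairForce α x y⟫ + ⟪y - c, pairForce α y x⟫ = ‖x - y‖ ^ (-α) := by
  have hxy : 0 < ‖x - y‖ := norm_pos_iff.2 (sub_ne_zero.2 h)
  rw [pairForce_swap α x y, inner_neg_right, ← sub_eq_add_neg, ← inner_sub_left,
    sub_sub_sub_cancel_right, pairForce, real_inner_smul_right, real_inner_self_eq_norm_sq,
    ← Real.rpow_natCast, ← Real.rpow_neg hxy.le, ← Real.rpow_add hxy]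
  norm_num

theorem sum_sum_erase_eq_sum_sum_lt {M : Type*} [AddCommMonoid M] (f : ι → ι → M) :
    ∑ j, ∑ k ∈ univ.erase j, f j k =
      ∑ j, ∑ k ∈ univ.filter (fun k => j < k), (f j k + f k j) := by
  have split (j : ι) : univ.erase j =
      univ.filter (fun k => j < k) ∪ univ.filter (fun k => k < j) := by
    ext k
    simp only [mem_erase, mem_union, mem_filter, mem_univ, true_and, and_true]
    exact ne_comm.trans lt_or_lt_iff_ne.symm
  have disjoint (j : ι) :
      Disjoint (univ.filter (fun k => j < k)) (univ.filter (fun k => k < j)) :=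
    disjoint_filter.2 fun _ _ h => h.not_gt
  simp only [split, sum_union (disjoint _), sum_add_distrib]
  congr 1
  exact sum_comm' fun _ _ => by simp only [mem_univ, mem_filter, true_and, and_true]

theorem sum_mul_norm_sq_eq_pairPotential (α : ℝ) {q : ι → E} (hq : Injective q)
    {Q : ι → ι → E} (hQ : ∀ j k, j ≠ k → Q j k = pairForce α (q j) (q k))
    (w : ι → ℝ) (c : E) (heq : ∀ j, q j - c = ∑ k ∈ univ.erase j, w k • Q j k) :
    ∑ j, w j * ‖q j - c‖ ^ 2 = pairPotential α w q := by
  have expand (j : ι) :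
      w j * ‖q j - c‖ ^ 2 = ∑ k ∈ univ.erase j, w j * w k * ⟪q j - c, Q j k⟫ := by
    rw [← real_inner_self_eq_norm_sq]
    nth_rw 2 [heq j]
    simp only [inner_sum, real_inner_smul_right, mul_sum, mul_assoc]
  simp only [expand, sum_sum_erase_eq_sum_sum_lt, pairPotential]
  refine sum_congr rfl fun j _ => sum_congr rfl fun k hk => ?_
  have hjk : j ≠ k := (mem_filter.1 hk).2.ne
  rw [hQ j k hjk, hQ k j hjk.symm,
    ← inner_sub_pairForce_add_inner_sub_pairForce α c (hq.ne hjk)]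
  ring

theorem stmt1 (n d : ℕ) (hn : 2 ≤ n) (α : ℝ) (hα : 0 < α)
    (q : Fin n → EuclideanSpace ℝ (Fin d))
    (hq : ∀ i j, i ≠ j → q i ≠ q j)
    (Q : Fin n → Fin n → EuclideanSpace ℝ (Fin d))
    (hQ : ∀ j k, j ≠ k → Q j k = (‖q j - q k‖ ^ (α + 2))⁻¹ • (q j - q k))
    (mh : Fin n → ℝ) (ch : EuclideanSpace ℝ (Fin d)) (hmh : ∀ j, 0 < mh j)
    (heq : ∀ j, q j = ch + ∑ k ∈ Finset.univ.erase j, mh k • Q j k) :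
    (∑ j, mh j * ‖q j - ch‖ ^ 2 =
      ∑ j, ∑ k ∈ Finset.univ.filter (fun k => j < k),
        mh j * mh k * ‖q j - q k‖ ^ (-α)) ∧
    (0 < ∑ j, mh j * ‖q j - ch‖ ^ 2) ∧
    (∀ (m : Fin n → ℝ) (lam : ℝ), (∀ j, 0 < m j) → lam ≠ 0 →
      (∀ j, q j = (∑ k, m k)⁻¹ • (∑ k, m k • q k) -
        (α / lam) • ∑ k ∈ Finset.univ.erase j, m k • Q j k) → lam < 0) := by
  have hinj : Injective q := fun i j hij => by_contra fun h => hq i j h hij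
  have : Nontrivial (Fin n) := Fin.nontrivial_iff_two_le.2 hn
  have energy := sum_mul_norm_sq_eq_pairPotential α hinj hQ
  have hmh_energy := energy mh ch fun j => by rw [heq j, add_sub_cancel_left]
  refine ⟨hmh_energy, hmh_energy ▸ pairPotential_pos α hinj hmh, fun m lam hm hlam hcm => ?_⟩
  set t := -(α / lam)
  have ht : t ≠ 0 := neg_ne_zero.2 (div_ne_zero hα.ne' hlam)
  have hm_energy := energy (t • m) _ fun j => by
    rw [hcm j, sub_sub_cancel_left, ← neg_smul, smul_sum]
    simp only [Pi.smul_apply, smul_eq_mul, mul_smul, t]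
  simp only [pairPotential_smul, Pi.smul_apply, smul_eq_mul, mul_assoc, ← mul_sum, sq t]
    at hm_energy
  have inertia_eq := mul_left_cancel₀ ht hm_energy
  have inertia_nonneg : 0 ≤ ∑ j, m j * ‖q j - (∑ k, m k)⁻¹ • ∑ k, m k • q k‖ ^ 2 :=
    sum_nonneg fun j _ => mul_nonneg (hm j).le (sq_nonneg _)
  have t_pos : 0 < t :=
    lt_of_le_of_ne (nonneg_of_mul_nonneg_left (inertia_eq ▸ inertia_nonneg)
      (pairPotential_pos α hinj hm)) ht.symm
  exact neg_of_div_neg_right (neg_pos.1 t_pos) hα.le
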